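/- arXiv:2208.03316 — 3 statements merged into one kernel-verified Lean document; each statement's English description precedes it below -/
import Mathlib

section
/- Let D₁', D₂', Θ₁, Θ₂, X₁, X₂, Y₁, Y₂ be nonempty types, let D₁ ⊆ D₁' × D₂' and D₂ ⊆ D₁' × D₂' be the data sets of two transfer learning systems that exchange knowledge, and let A₁ : D₁ → Θ₁, H₁ : Θ₁ × X₁ → Y₁ and A₂ : D₂ → Θ₂, H₂ : Θ₂ × X₂ → Y₂ be their learning algorithms and hypothesis maps. Define the multi-task elementary system M ⊆ ((D₁ × D₂) × (X₁ × X₂)) × (Y₁ × Y₂) by (((d₁,d₂),(x₁,x₂)),(y₁,y₂)) ∈ M ↔ y₁ = H₁(A₁ d₁, x₁) ∧ y₂ = H₂(A₂ d₂, x₂). Then the reassociation map ρ : (D₁ × X₁) × (D₂ × X₂) → (D₁ × D₂) × (X₁ × X₂), ρ((d₁,x₁),(d₂,x₂)) = ((d₁,d₂),(x₁,x₂)), together with the identity map ϑ on Y₁ × Y₂, is a homomorphism from the parallel connection E(A₁,H₁) ∥ E(A₂,H₂) to M: ρ and ϑ are surjective, and every element of E(A₁,H₁) ∥ E(A₂,H₂)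 is mapped by (ρ, ϑ) into M. (This is the paper's Theorem 1: a two-way transfer learning system is homomorphic to a multi-task learning system.) -/
/-- Elementary learning system of an algorithm `A` and hypothesis map `H`:
the relation `{((d,x),y) | y = H (A d, x)}`. -/
def elemSys {D Θ X Y : Type*} (A : D → Θ) (H : Θ × X → Y) : Set ((D × X) × Y) :=
  {p | p.2 = H (A p.1.1, p.1.2)}

/-- Parallel connection of two input-output relations. -/
def parallel {X₁ Y₁ X₂ Y₂ : Type*} (S₁ : Set (X₁ × Y₁)) (S₂ : Set (X₂ × Y₂)) :
    Set ((X₁ × X₂) × (Y₁ × Y₂)) :=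
  {p | (p.1.1, p.2.1) ∈ S₁ ∧ (p.1.2, p.2.2) ∈ S₂}

/-! A two-way transfer system is a pair of elementary systems run side by side. Pairing the
algorithms and the hypothesis maps turns it into a single elementary system, the multi-task
system, whose input only groups the data and the query points differently; so reassociating
the input and keeping the output is a homomorphism. -/

def IsRelHom {X₁ Y₁ X₂ Y₂ : Type*} (S₁ : Set (X₁ × Y₁)) (S₂ : Set (X₂ × Y₂))
    (ρ : X₁ → X₂) (ϑ : Y₁ → Y₂) : Prop :=
  Function.Surjective ρ ∧ Function.Surjective ϑ ∧ ∀ p ∈ S₁, (ρ p.1, ϑ p.2) ∈ S₂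

section MultiTask

variable {D₁ D₂ Θ₁ Θ₂ X₁ X₂ Y₁ Y₂ : Type*}
  (A₁ : D₁ → Θ₁) (H₁ : Θ₁ × X₁ → Y₁) (A₂ : D₂ → Θ₂) (H₂ : Θ₂ × X₂ → Y₂)

def prodHypothesis : (Θ₁ × Θ₂) × (X₁ × X₂) → Y₁ × Y₂ :=
  fun q => (H₁ (q.1.1, q.2.1), H₂ (q.1.2, q.2.2))

/-- The multi-task elementary system `M` of the paper. -/
def multiTaskSys : Set (((D₁ × D₂) × (X₁ × X₂)) × (Y₁ × Y₂)) :=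
  elemSys (Prod.map A₁ A₂) (prodHypothesis H₁ H₂)

theorem mem_multiTaskSys_iff (d₁ : D₁) (d₂ : D₂) (x₁ : X₁) (x₂ : X₂) (y₁ : Y₁) (y₂ : Y₂) :
    (((d₁, d₂), (x₁, x₂)), (y₁, y₂)) ∈ multiTaskSys A₁ H₁ A₂ H₂ ↔
      y₁ = H₁ (A₁ d₁, x₁) ∧ y₂ = H₂ (A₂ d₂, x₂) :=
  Prod.ext_iff

theorem isRelHom_parallel_elemSys_multiTaskSys :
    IsRelHom (parallel (elemSys A₁ H₁) (elemSys A₂ H₂)) (multiTaskSys A₁ H₁ A₂ H₂)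
      (Equiv.prodProdProdComm D₁ X₁ D₂ X₂) id := by
  refine ⟨Equiv.surjective _, Function.surjective_id, ?_⟩
  rintro ⟨⟨⟨d₁, x₁⟩, d₂, x₂⟩, y₁, y₂⟩ ⟨h₁, h₂⟩
  exact (mem_multiTaskSys_iff A₁ H₁ A₂ H₂ d₁ d₂ x₁ x₂ y₁ y₂).mpr ⟨h₁, h₂⟩

end MultiTask

theorem twoWayTransfer_homomorphic_to_multiTask_general
    {D₁' D₂' Θ₁ Θ₂ X₁ X₂ Y₁ Y₂ : Type*}
    (D₁ D₂ : Set (D₁' × D₂'))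
    (A₁ : ↥D₁ → Θ₁) (H₁ : Θ₁ × X₁ → Y₁)
    (A₂ : ↥D₂ → Θ₂) (H₂ : Θ₂ × X₂ → Y₂)
    (M : Set (((↥D₁ × ↥D₂) × (X₁ × X₂)) × (Y₁ × Y₂)))
    (hM : ∀ (d₁ : ↥D₁) (d₂ : ↥D₂) (x₁ : X₁) (x₂ : X₂) (y₁ : Y₁) (y₂ : Y₂),
      (((d₁, d₂), (x₁, x₂)), (y₁, y₂)) ∈ M ↔
        y₁ = H₁ (A₁ d₁, x₁) ∧ y₂ = H₂ (A₂ d₂, x₂))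
    (ρ : (↥D₁ × X₁) × (↥D₂ × X₂) → (↥D₁ × ↥D₂) × (X₁ × X₂))
    (hρ : ∀ p : (↥D₁ × X₁) × (↥D₂ × X₂),
      ρ p = ((p.1.1, p.2.1), (p.1.2, p.2.2)))
    (ϑ : Y₁ × Y₂ → Y₁ × Y₂) (hϑ : ϑ = id) :
    Function.Surjective ρ ∧ Function.Surjective ϑ ∧
      ∀ p ∈ parallel (elemSys A₁ H₁) (elemSys A₂ H₂), (ρ p.1, ϑ p.2) ∈ M := by
  have hM' : M = multiTaskSys A₁ H₁ A₂ H₂ := by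
    ext ⟨⟨⟨d₁, d₂⟩, x₁, x₂⟩, y₁, y₂⟩
    rw [hM, mem_multiTaskSys_iff]
  have hρ' : ρ = Equiv.prodProdProdComm D₁ X₁ D₂ X₂ := funext hρ
  subst hM' hρ' hϑ
  exact isRelHom_parallel_elemSys_multiTaskSys A₁ H₁ A₂ H₂

/-- Theorem 1: two-way transfer learning systems are homomorphic to a
multi-task learning system.  The data sets `D₁, D₂ ⊆ D₁' × D₂'` of the two
transfer learning systems exchange knowledge; the reassociation map `ρ`
together with the identity `ϑ` is a surjective pair of maps carrying the
parallel connection `E(A₁,H₁) ∥ E(A₂,H₂)` into the multi-task elementary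
system `M`. -/
theorem twoWayTransfer_homomorphic_to_multiTask
    {D₁' D₂' Θ₁ Θ₂ X₁ X₂ Y₁ Y₂ : Type*}
    [Nonempty D₁'] [Nonempty D₂'] [Nonempty Θ₁] [Nonempty Θ₂]
    [Nonempty X₁] [Nonempty X₂] [Nonempty Y₁] [Nonempty Y₂]
    (D₁ D₂ : Set (D₁' × D₂'))
    (A₁ : ↥D₁ → Θ₁) (H₁ : Θ₁ × X₁ → Y₁)
    (A₂ : ↥D₂ → Θ₂) (H₂ : Θ₂ × X₂ → Y₂)
    (M : Set (((↥D₁ × ↥D₂) × (X₁ × X₂)) × (Y₁ × Y₂)))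
    (hM : ∀ (d₁ : ↥D₁) (d₂ : ↥D₂) (x₁ : X₁) (x₂ : X₂) (y₁ : Y₁) (y₂ : Y₂),
      (((d₁, d₂), (x₁, x₂)), (y₁, y₂)) ∈ M ↔
        y₁ = H₁ (A₁ d₁, x₁) ∧ y₂ = H₂ (A₂ d₂, x₂))
    (ρ : (↥D₁ × X₁) × (↥D₂ × X₂) → (↥D₁ × ↥D₂) × (X₁ × X₂))
    (hρ : ∀ p : (↥D₁ × X₁) × (↥D₂ × X₂),
      ρ p = ((p.1.1, p.2.1), (p.1.2, p.2.2)))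
    (ϑ : Y₁ × Y₂ → Y₁ × Y₂) (hϑ : ϑ = id) :
    Function.Surjective ρ ∧ Function.Surjective ϑ ∧
      ∀ p ∈ parallel (elemSys A₁ H₁) (elemSys A₂ H₂), (ρ p.1, ϑ p.2) ∈ M :=
  twoWayTransfer_homomorphic_to_multiTask_general D₁ D₂ A₁ H₁ A₂ H₂ M hM ρ hρ ϑ hϑ
end

section
/- Let D₂, Θ₂, D₁, Θ₁, X, Y be types, let A₂ : D₂ → Θ₂ be a learning algorithm (the meta-level algorithm), let A₁ : Θ₂ × D₁ → Θ₁ be a parameterized learning algorithm, and let H₁ : Θ₁ × X → Y be a hypothesis map. Let G ⊆ D₂ × (PUnit × Θ₂) be the graph of A₂ with trivial first output component, G = {(d₂, (⋆, θ₂)) | θ₂ = A₂ d₂}, and let L ⊆ ((D₁ × X) × Θ₂) × Y be the elementary system of the base learner with shared parameter input, L = {(((d₁,x),θ₂), y) | y = H₁(A₁(θ₂,d₁), x)}. Then the cascade connection G ∘ L ⊆ (D₂ × (D₁ × X)) × (PUnit × Y) satisfies: ((d₂,(d₁,x)),(⋆,y)) ∈ G ∘ L if and only if y = H₁(A₁(A₂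 d₂, d₁), x); that is, the cascade connection of the meta-algorithm and the learning system is (up to the trivial PUnit component) the elementary learning system E(A', H₁) of the meta-learning system with data set D₂ × D₁ and composite algorithm A'(d₂,d₁) = A₁(A₂ d₂, d₁). (This is the paper's Theorem 3: meta-learning systems are a cascade connection of a learning algorithm and a learning system.) -/
/-- Cascade connection of `S₁ ⊆ X₁ × (Y₁ × Z)` and `S₂ ⊆ (X₂ × Z) × Y₂`. -/
def cascade {X₁ Y₁ Z X₂ Y₂ : Type*}
    (S₁ : Set (X₁ × (Y₁ × Z))) (S₂ : Set ((X₂ × Z) × Y₂)) :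
    Set ((X₁ × X₂) × (Y₁ × Y₂)) :=
  {p | ∃ z : Z, (p.1.1, (p.2.1, z)) ∈ S₁ ∧ ((p.1.2, z), p.2.2) ∈ S₂}

theorem mem_elemSys {D Θ X Y : Type*} {A : D → Θ} {H : Θ × X → Y} {d : D} {x : X} {y : Y} :
    ((d, x), y) ∈ elemSys A H ↔ y = H (A d, x) :=
  Iff.rfl

theorem mem_cascade_setOf_snd_snd_eq {X₁ Y₁ Z X₂ Y₂ : Type*} (f : X₁ → Z)
    (S₂ : Set ((X₂ × Z) × Y₂)) {x₁ : X₁} {x₂ : X₂} {y₁ : Y₁} {y₂ : Y₂} :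
    ((x₁, x₂), (y₁, y₂)) ∈ cascade {p : X₁ × (Y₁ × Z) | p.2.2 = f p.1} S₂ ↔
      ((x₂, f x₁), y₂) ∈ S₂ := by
  constructor
  · rintro ⟨z, hfz, hz⟩
    obtain rfl : z = f x₁ := hfz
    exact hz
  · exact fun h => ⟨f x₁, rfl, h⟩

/-- Theorem 3: meta-learning systems are a cascade connection of a learning
algorithm and a learning system.  With `G` the graph of the meta-algorithm
`A₂` (with trivial `PUnit` first output component) and `L` the elementary
system of the base learner with shared parameter input, the cascade
connection `G ∘ L` is, up to the trivial `PUnit` component, the elementary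
learning system of the meta-learning system with composite algorithm
`A'(d₂,d₁) = A₁(A₂ d₂, d₁)`. -/
theorem metaLearning_cascade
    {D₂ Θ₂ D₁ Θ₁ X Y : Type*}
    (A₂ : D₂ → Θ₂) (A₁ : Θ₂ × D₁ → Θ₁) (H₁ : Θ₁ × X → Y)
    (G : Set (D₂ × (PUnit × Θ₂)))
    (hG : G = {p : D₂ × (PUnit × Θ₂) | p.2.2 = A₂ p.1})
    (L : Set (((D₁ × X) × Θ₂) × Y))
    (hL : L = {p : ((D₁ × X) × Θ₂) × Y | p.2 = H₁ (A₁ (p.1.2, p.1.1.1), p.1.1.2)}) :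
    ∀ (d₂ : D₂) (d₁ : D₁) (x : X) (y : Y),
      ((d₂, (d₁, x)), (PUnit.unit, y)) ∈ cascade G L ↔
        y = H₁ (A₁ (A₂ d₂, d₁), x) ∧
        (((d₂, d₁), x), y) ∈ elemSys (fun p : D₂ × D₁ => A₁ (A₂ p.1, p.2)) H₁ := by
  intro d₂ d₁ x y
  subst hG hL
  rw [mem_cascade_setOf_snd_snd_eq, mem_elemSys, and_self]
  rfl
end

section
/- Let D_{m1}, D_{m2}, Θ_{m1}, Θ_{m2}, D₁, D₂, Θ₁, Θ₂, X₁, X₂, Y₁, Y₂ be types, and for i = 1, 2 let A_{mi} : D_{mi} → Θ_{mi} be a meta-learning algorithm, H_{mi} : Θ_{mi} × D_i → Θ_i a meta-hypothesis map, and H_i : Θ_i × X_i → Y_i a base hypothesis map (a two-way transfer learning system with meta-learning, where D₁ and D₂ may each carry knowledge from both base systems). Then the composite elementary system {((((d_{m1}, d₁), x₁), ((d_{m2}, d₂), x₂)), (y₁, y₂)) | y₁ = H₁(H_{m1}(A_{m1} d_{m1}, d₁), x₁) ∧ y₂ = H₂(H_{m2}(A_{m2} d_{m2}, d₂), x₂)}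 is homomorphic, via the reassociation bijection (((d_{m1},d₁),x₁),((d_{m2},d₂),x₂)) ↦ (((d_{m1},d₁),(d_{m2},d₂)),(x₁,x₂)) on inputs and the identity on outputs, to the elementary learning system E(A', H') of a single generic learning system with data set (D_{m1} × D₁) × (D_{m2} × D₂), algorithm A'((d_{m1},d₁),(d_{m2},d₂)) = (H_{m1}(A_{m1} d_{m1}, d₁), H_{m2}(A_{m2} d_{m2}, d₂)), and hypothesis H'((θ₁,θ₂),(x₁,x₂)) = (H₁(θ₁,x₁), H₂(θ₂,x₂)); both maps are surjective and membership is preserved. -/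
/-- `(ρ, ϑ)` is a homomorphism from relation `S₁` to relation `S₂`:
both maps are surjective and membership is preserved. -/
def IsHom {X₁ Y₁ X₂ Y₂ : Type*} (S₁ : Set (X₁ × Y₁)) (S₂ : Set (X₂ × Y₂))
    (ρ : X₁ → X₂) (ϑ : Y₁ → Y₂) : Prop :=
  Function.Surjective ρ ∧ Function.Surjective ϑ ∧
    ∀ p ∈ S₁, (ρ p.1, ϑ p.2) ∈ S₂

/-- A two-way transfer learning system with meta-learning is homomorphic,
via reassociation on inputs and the identity on outputs, to the elementary
learning system of a single generic learning system with composite algorithm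
`A'((d_m1,d₁),(d_m2,d₂)) = (H_m1 (A_m1 d_m1, d₁), H_m2 (A_m2 d_m2, d₂))` and
hypothesis `H'((θ₁,θ₂),(x₁,x₂)) = (H₁(θ₁,x₁), H₂(θ₂,x₂))`. -/
theorem twoWayTransferMeta_homomorphic_to_generic
    {Dm₁ Dm₂ Θm₁ Θm₂ D₁ D₂ Θ₁ Θ₂ X₁ X₂ Y₁ Y₂ : Type*}
    (Am₁ : Dm₁ → Θm₁) (Hm₁ : Θm₁ × D₁ → Θ₁) (H₁ : Θ₁ × X₁ → Y₁)
    (Am₂ : Dm₂ → Θm₂) (Hm₂ : Θm₂ × D₂ → Θ₂) (H₂ : Θ₂ × X₂ → Y₂) :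
    IsHom
      {p : (((Dm₁ × D₁) × X₁) × ((Dm₂ × D₂) × X₂)) × (Y₁ × Y₂) |
        p.2.1 = H₁ (Hm₁ (Am₁ p.1.1.1.1, p.1.1.1.2), p.1.1.2) ∧
        p.2.2 = H₂ (Hm₂ (Am₂ p.1.2.1.1, p.1.2.1.2), p.1.2.2)}
      (elemSys
        (fun d : (Dm₁ × D₁) × (Dm₂ × D₂) =>
          (Hm₁ (Am₁ d.1.1, d.1.2), Hm₂ (Am₂ d.2.1, d.2.2)))
        (fun q : (Θ₁ × Θ₂) × (X₁ × X₂) =>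
          (H₁ (q.1.1, q.2.1), H₂ (q.1.2, q.2.2))))
      (fun x : ((Dm₁ × D₁) × X₁) × ((Dm₂ × D₂) × X₂) =>
        ((x.1.1, x.2.1), (x.1.2, x.2.2)))
      id := by
  refine ⟨(Equiv.prodProdProdComm _ _ _ _).surjective, Function.surjective_id, ?_⟩
  rintro ⟨x, y⟩ ⟨h₁, h₂⟩
  exact Prod.ext h₁ h₂
end
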